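/- (Chain rule) Let U ⊂ W be open, Ω ⊂ H^n open, φ: U → V with graph map Φ(u) = uφ(u) satisfying Φ(U) ⊂ Ω, and f: Ω → R^k. Fix x_W ∈ U and set x = Φ(x_W). If f is Pansu differentiable at x and φ is intrinsic differentiable at x_W, then F = f ∘ Φ is extrinsically differentiable at x_W with respect to (V, x) and d^V_x F(w) = Df(x)(w · dφ_{x_W}(w)) for every w ∈ W. -/

import Mathlib

/-!
Write `ψ(w) = φ_{x⁻¹}(w)` and `η(w) = w · ψ(w)`, so that `σ_x(w) · φ(σ_x(w)) = x · η(w)`. As `Df`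
is a homomorphism,
`F(σ_x w) − F(x_W) − Df(w · L w) = [f(x · η) − f(x) − Df(η)] + [Df(ψ(w)) − Df(L w)]`.
The triangle inequality and the boundedness of `L` give `d(η(w), 0) = O(‖w‖)`, so the first bracket
is `o(‖w‖)` by Pansu differentiability. Homogeneous homomorphisms into a vector space are linear
maps that kill the centre, hence Lipschitz for `d`, so the second bracket is `O(d(L w, ψ(w)))`,
which is `o(‖w‖)` by intrinsic differentiability. All these bounds come from comparing `d(·, 0)`
with the explicit homogeneous gauge `max(|p_H|, |p_{2n+1}|^{1/2})` on its compact unit sphere.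
-/

noncomputable section

open Filter Set
open scoped BigOperators Topology ENNReal

/-- The Heisenberg group product on `ℝ^{2n+1}` in symplectic coordinates. -/
def hmul (n : ℕ) (x y : Fin (2*n+1) → ℝ) : Fin (2*n+1) → ℝ := fun j =>
  x j + y j + (if (j : ℕ) = 2*n then
    (∑ i : Fin n, (x ⟨(i:ℕ), by omega⟩ * y ⟨(i:ℕ)+n, by omega⟩
      - x ⟨(i:ℕ)+n, by omega⟩ * y ⟨(i:ℕ), by omega⟩)) / 2
  else 0)

/-- Intrinsic dilations of the Heisenberg group. -/
def hdil (n : ℕ) (t : ℝ) (x : Fin (2*n+1) → ℝ) : Fin (2*n+1) → ℝ := fun j =>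
  if (j : ℕ) = 2*n then t^2 * x j else t * x j

/-- The horizontal layer `H_1`. -/
def H1set (n : ℕ) : Set (Fin (2*n+1) → ℝ) := {x | x ⟨2*n, by omega⟩ = 0}

/-- The vertical layer (center) `H_2`. -/
def H2set (n : ℕ) : Set (Fin (2*n+1) → ℝ) := {x | ∀ j : Fin (2*n+1), (j:ℕ) ≠ 2*n → x j = 0}

/-- A homogeneous distance on the Heisenberg group: a distance inducing the standard
topology, left invariant and 1-homogeneous under dilations. -/
structure IsHomDist (n : ℕ) (d : (Fin (2*n+1) → ℝ) → (Fin (2*n+1) → ℝ) → ℝ) : Prop where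
  eq_zero_iff : ∀ x y, d x y = 0 ↔ x = y
  symm : ∀ x y, d x y = d y x
  triangle : ∀ x y z, d x z ≤ d x y + d y z
  continuous : Continuous fun p : (Fin (2*n+1) → ℝ) × (Fin (2*n+1) → ℝ) => d p.1 p.2
  ball_mem_nhds : ∀ x : Fin (2*n+1) → ℝ, ∀ ε > (0:ℝ), {y | d x y < ε} ∈ nhds x
  leftInvariant : ∀ z x y, d (hmul n z x) (hmul n z y) = d x y
  homogeneous : ∀ t > (0:ℝ), ∀ x y, d (hdil n t x) (hdil n t y) = t * d x y

/-- A homogeneous subgroup: a closed subgroup invariant under all dilations. -/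
structure IsHomSubgroup (n : ℕ) (S : Set (Fin (2*n+1) → ℝ)) : Prop where
  zero_mem : (0 : Fin (2*n+1) → ℝ) ∈ S
  mul_mem : ∀ x ∈ S, ∀ y ∈ S, hmul n x y ∈ S
  neg_mem : ∀ x ∈ S, -x ∈ S
  dil_mem : ∀ t > (0:ℝ), ∀ x ∈ S, hdil n t x ∈ S
  closed : IsClosed S

/-- A vertical subgroup contains the center `H_2`. -/
def IsVertical (n : ℕ) (S : Set (Fin (2*n+1) → ℝ)) : Prop := IsHomSubgroup n S ∧ H2set n ⊆ S

/-- A horizontal subgroup is contained in `H_1`. -/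
def IsHorizontal (n : ℕ) (S : Set (Fin (2*n+1) → ℝ)) : Prop := IsHomSubgroup n S ∧ S ⊆ H1set n

/-- `H^n = W ⋊ V`. -/
def IsSemidirect (n : ℕ) (W V : Set (Fin (2*n+1) → ℝ)) : Prop :=
  (∀ x, ∃ w ∈ W, ∃ v ∈ V, x = hmul n w v) ∧ W ∩ V = {0}

/-- An h-homomorphism with values in `ℝ^k`. -/
def IsHHomMap (n k : ℕ) (L : (Fin (2*n+1) → ℝ) → EuclideanSpace ℝ (Fin k)) : Prop :=
  (∀ p q, L (hmul n p q) = L p + L q) ∧ (∀ t > (0:ℝ), ∀ p, L (hdil n t p) = t • L p)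

/-- An h-homomorphism of the Heisenberg group into itself. -/
def IsHHomH (n : ℕ) (L : (Fin (2*n+1) → ℝ) → (Fin (2*n+1) → ℝ)) : Prop :=
  (∀ p q, L (hmul n p q) = hmul n (L p) (L q)) ∧
  (∀ t > (0:ℝ), ∀ p, L (hdil n t p) = hdil n t (L p))

/-- Pansu differentiability of `f` at `x` with h-differential `Df`. -/
def PansuDiffAt (n k : ℕ) (d : (Fin (2*n+1) → ℝ) → (Fin (2*n+1) → ℝ) → ℝ)
    (f : (Fin (2*n+1) → ℝ) → EuclideanSpace ℝ (Fin k))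
    (Df : (Fin (2*n+1) → ℝ) → EuclideanSpace ℝ (Fin k)) (x : Fin (2*n+1) → ℝ) : Prop :=
  IsHHomMap n k Df ∧
  Tendsto (fun w => ‖f (hmul n x w) - f x - Df w‖ / d w 0)
    (𝓝[{(0 : Fin (2*n+1) → ℝ)}ᶜ] 0) (𝓝 0)

/-- Intrinsic differentiability at `ζ ∈ W` of `φ : W ⊇ U → V`, with intrinsic
differential `L`, relative to the splitting `(W, V)`; here `x = ζ·φ(ζ)` and
`φ_{x⁻¹}(w) = φ(ζ)⁻¹ · φ(x · w · φ(ζ)⁻¹)`. -/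
def IntrinsicDiffAt (n : ℕ) (d : (Fin (2*n+1) → ℝ) → (Fin (2*n+1) → ℝ) → ℝ)
    (W V : Set (Fin (2*n+1) → ℝ))
    (φ : (Fin (2*n+1) → ℝ) → (Fin (2*n+1) → ℝ))
    (L : (Fin (2*n+1) → ℝ) → (Fin (2*n+1) → ℝ)) (ζ : Fin (2*n+1) → ℝ) : Prop :=
  IsHHomH n L ∧ L '' W ⊆ V ∧
  Tendsto (fun w => d (L w)
      (hmul n (-(φ ζ)) (φ (hmul n (hmul n (hmul n ζ (φ ζ)) w) (-(φ ζ))))) / d w 0)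
    (𝓝[W \ {0}] 0) (𝓝 0)

open Asymptotics

section HeisenbergGroup

variable {n : ℕ}

def sympForm (n : ℕ) (x y : Fin (2*n+1) → ℝ) : ℝ :=
  ∑ i : Fin n, (x ⟨i, by omega⟩ * y ⟨i + n, by omega⟩ - x ⟨i + n, by omega⟩ * y ⟨i, by omega⟩)

lemma hmul_apply_of_ne (x y : Fin (2*n+1) → ℝ) {j : Fin (2*n+1)} (hj : (j : ℕ) ≠ 2*n) :
    hmul n x y j = x j + y j := by
  simp [hmul, hj]

lemma hmul_apply_last (x y : Fin (2*n+1) → ℝ) :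
    hmul n x y (Fin.last _) = x (Fin.last _) + y (Fin.last _) + sympForm n x y / 2 := by
  simp [hmul, sympForm]

lemma heis_ext {p q : Fin (2*n+1) → ℝ} (h : ∀ j : Fin (2*n+1), (j : ℕ) ≠ 2*n → p j = q j)
    (hlast : p (Fin.last _) = q (Fin.last _)) : p = q := by
  funext j
  by_cases hj : (j : ℕ) = 2*n
  · rwa [show j = Fin.last _ from Fin.ext hj]
  · exact h j hj

lemma sympForm_hmul_left (x y z : Fin (2*n+1) → ℝ) :
    sympForm n (hmul n x y) z = sympForm n x z + sympForm n y z := by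
  simp only [sympForm, ← Finset.sum_add_distrib]
  refine Finset.sum_congr rfl fun i _ => ?_
  have := i.isLt
  rw [hmul_apply_of_ne _ _ (by simp; omega), hmul_apply_of_ne _ _ (by simp; omega)]
  ring

lemma sympForm_hmul_right (x y z : Fin (2*n+1) → ℝ) :
    sympForm n x (hmul n y z) = sympForm n x y + sympForm n x z := by
  simp only [sympForm, ← Finset.sum_add_distrib]
  refine Finset.sum_congr rfl fun i _ => ?_
  have := i.isLt
  rw [hmul_apply_of_ne _ _ (by simp; omega), hmul_apply_of_ne _ _ (by simp; omega)]
  ring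

lemma sympForm_of_mem_H2set {x c : Fin (2*n+1) → ℝ} (hc : c ∈ H2set n) : sympForm n x c = 0 := by
  refine Finset.sum_eq_zero fun i _ => ?_
  have := i.isLt
  rw [hc _ (by simp; omega), hc _ (by simp; omega)]
  ring

lemma sympForm_neg_self (x : Fin (2*n+1) → ℝ) : sympForm n x (-x) = 0 :=
  Finset.sum_eq_zero fun i _ => by simp only [Pi.neg_apply]; ring

lemma sympForm_self (x : Fin (2*n+1) → ℝ) : sympForm n x x = 0 :=
  Finset.sum_eq_zero fun i _ => by ring

lemma hmul_assoc (x y z : Fin (2*n+1) → ℝ) :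
    hmul n (hmul n x y) z = hmul n x (hmul n y z) :=
  heis_ext (fun j hj => by simp only [hmul_apply_of_ne _ _ hj]; ring)
    (by simp only [hmul_apply_last, sympForm_hmul_left, sympForm_hmul_right]; ring)

lemma hmul_of_mem_H2set {x c : Fin (2*n+1) → ℝ} (hc : c ∈ H2set n) : hmul n x c = x + c :=
  heis_ext (fun j hj => hmul_apply_of_ne _ _ hj)
    (by rw [hmul_apply_last, sympForm_of_mem_H2set hc]; simp)

lemma zero_mem_H2set : (0 : Fin (2*n+1) → ℝ) ∈ H2set n := fun _ _ => rfl

lemma hmul_zero (x : Fin (2*n+1) → ℝ) : hmul n x 0 = x := by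
  simp [hmul_of_mem_H2set zero_mem_H2set]

lemma zero_hmul (x : Fin (2*n+1) → ℝ) : hmul n 0 x = x :=
  heis_ext (fun j hj => by simp [hmul_apply_of_ne _ _ hj])
    (by simp [hmul_apply_last, sympForm])

lemma hmul_neg_self (x : Fin (2*n+1) → ℝ) : hmul n x (-x) = 0 :=
  heis_ext (fun j hj => by simp [hmul_apply_of_ne _ _ hj])
    (by simp [hmul_apply_last, sympForm_neg_self])

lemma hmul_self (x : Fin (2*n+1) → ℝ) : hmul n x x = (2 : ℝ) • x :=
  heis_ext (fun j hj => by simp [hmul_apply_of_ne _ _ hj]; ring)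
    (by simp [hmul_apply_last, sympForm_self]; ring)

lemma hdil_apply_of_ne (t : ℝ) (x : Fin (2*n+1) → ℝ) {j : Fin (2*n+1)} (hj : (j : ℕ) ≠ 2*n) :
    hdil n t x j = t * x j := by
  simp [hdil, hj]

lemma hdil_of_mem_H2set (t : ℝ) {c : Fin (2*n+1) → ℝ} (hc : c ∈ H2set n) :
    hdil n t c = t ^ 2 • c :=
  heis_ext (fun j hj => by simp [hdil_apply_of_ne _ _ hj, hc j hj]) (by simp [hdil])

lemma hdil_hdil (s t : ℝ) (x : Fin (2*n+1) → ℝ) : hdil n s (hdil n t x) = hdil n (s * t) x := by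
  funext j; by_cases hj : (j : ℕ) = 2*n <;> simp [hdil, hj] <;> ring

lemma hdil_one (x : Fin (2*n+1) → ℝ) : hdil n 1 x = x := by
  funext j; by_cases hj : (j : ℕ) = 2*n <;> simp [hdil, hj]

lemma hdil_zero_right (t : ℝ) : hdil n t 0 = 0 := by
  funext j; by_cases hj : (j : ℕ) = 2*n <;> simp [hdil, hj]

end HeisenbergGroup

section Gauge

variable {n : ℕ}

def horizontalPart (n : ℕ) (p : Fin (2*n+1) → ℝ) : Fin (2*n+1) → ℝ :=
  fun j => if (j : ℕ) = 2*n then 0 else p j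

lemma horizontalPart_apply_of_ne (p : Fin (2*n+1) → ℝ) {j : Fin (2*n+1)} (hj : (j : ℕ) ≠ 2*n) :
    horizontalPart n p j = p j := by
  simp [horizontalPart, hj]

lemma horizontalPart_apply_last (p : Fin (2*n+1) → ℝ) : horizontalPart n p (Fin.last _) = 0 := by
  simp [horizontalPart]

lemma horizontalPart_hmul (p q : Fin (2*n+1) → ℝ) :
    horizontalPart n (hmul n p q) = horizontalPart n p + horizontalPart n q :=
  heis_ext (fun j hj => by simp [horizontalPart_apply_of_ne _ hj, hmul_apply_of_ne _ _ hj])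
    (by simp [horizontalPart_apply_last])

lemma horizontalPart_hdil (t : ℝ) (p : Fin (2*n+1) → ℝ) :
    horizontalPart n (hdil n t p) = t • horizontalPart n p :=
  heis_ext (fun j hj => by simp [horizontalPart_apply_of_ne _ hj, hdil_apply_of_ne _ _ hj])
    (by simp [horizontalPart_apply_last])

lemma horizontalPart_add (p q : Fin (2*n+1) → ℝ) :
    horizontalPart n (p + q) = horizontalPart n p + horizontalPart n q := by
  funext j; by_cases hj : (j : ℕ) = 2*n <;> simp [horizontalPart, hj]

lemma horizontalPart_smul (t : ℝ) (p : Fin (2*n+1) → ℝ) :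
    horizontalPart n (t • p) = t • horizontalPart n p := by
  funext j; by_cases hj : (j : ℕ) = 2*n <;> simp [horizontalPart, hj]

lemma horizontalPart_horizontalPart (p : Fin (2*n+1) → ℝ) :
    horizontalPart n (horizontalPart n p) = horizontalPart n p := by
  funext j; by_cases hj : (j : ℕ) = 2*n <;> simp [horizontalPart, hj]

def heisGauge (n : ℕ) (p : Fin (2*n+1) → ℝ) : ℝ :=
  max ‖horizontalPart n p‖ √|p (Fin.last _)|

lemma norm_horizontalPart_le_heisGauge (p : Fin (2*n+1) → ℝ) :
    ‖horizontalPart n p‖ ≤ heisGauge n p :=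
  le_max_left _ _

lemma heisGauge_nonneg (p : Fin (2*n+1) → ℝ) : 0 ≤ heisGauge n p :=
  (norm_nonneg _).trans (norm_horizontalPart_le_heisGauge p)

lemma heisGauge_of_apply_last_eq_zero {p : Fin (2*n+1) → ℝ} (hp : p (Fin.last _) = 0) :
    heisGauge n p = ‖horizontalPart n p‖ := by
  simp [heisGauge, hp]

lemma heisGauge_hdil {t : ℝ} (ht : 0 ≤ t) (p : Fin (2*n+1) → ℝ) :
    heisGauge n (hdil n t p) = t * heisGauge n p := by
  have hsqrt : √|t ^ 2 * p (Fin.last _)| = t * √|p (Fin.last _)| := by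
    rw [abs_mul, Real.sqrt_mul (abs_nonneg _), abs_of_nonneg (sq_nonneg t), Real.sqrt_sq ht]
  simp only [heisGauge, horizontalPart_hdil, norm_smul, Real.norm_of_nonneg ht]
  simp only [hdil, Fin.val_last, if_true, hsqrt, mul_max_of_nonneg _ _ ht]

lemma continuous_heisGauge : Continuous (heisGauge n) := by
  refine Continuous.max (Continuous.norm <| continuous_pi fun j => ?_)
    (Real.continuous_sqrt.comp (continuous_apply _).abs)
  by_cases hj : (j : ℕ) = 2*n
  · simpa [horizontalPart, hj] using continuous_const
  · simpa [horizontalPart, hj] using continuous_apply j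

lemma norm_le_heisGauge_add_sq (p : Fin (2*n+1) → ℝ) :
    ‖p‖ ≤ heisGauge n p + heisGauge n p ^ 2 := by
  have hg := heisGauge_nonneg p
  refine pi_norm_le_iff_of_nonneg (by positivity) |>.mpr fun j => ?_
  rw [Real.norm_eq_abs]
  by_cases hj : (j : ℕ) = 2*n
  · obtain rfl : j = Fin.last _ := Fin.ext hj
    have hsq : √|p (Fin.last _)| ≤ heisGauge n p := le_max_right _ _
    have := Real.sq_sqrt (abs_nonneg (p (Fin.last (2*n))))
    nlinarith [Real.sqrt_nonneg |p (Fin.last (2*n))|]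
  · have h := (norm_le_pi_norm (horizontalPart n p) j).trans (norm_horizontalPart_le_heisGauge p)
    rw [horizontalPart_apply_of_ne _ hj, Real.norm_eq_abs] at h
    nlinarith

lemma heisGauge_zero : heisGauge n 0 = 0 := by
  have : horizontalPart n (0 : Fin (2*n+1) → ℝ) = 0 := by
    simpa [hdil_zero_right] using horizontalPart_hdil (n := n) 0 0
  simp [heisGauge, this]

lemma heisGauge_pos {p : Fin (2*n+1) → ℝ} (hp : p ≠ 0) : 0 < heisGauge n p :=
  (heisGauge_nonneg p).lt_of_ne fun h => hp <| norm_le_zero_iff.mp <| by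
    simpa [← h] using norm_le_heisGauge_add_sq p

lemma isCompact_heisGauge_eq_one : IsCompact {p : Fin (2*n+1) → ℝ | heisGauge n p = 1} := by
  refine (isCompact_closedBall (0 : Fin (2*n+1) → ℝ) 2).of_isClosed_subset
    (isClosed_eq continuous_heisGauge continuous_const) fun p hp => ?_
  have := norm_le_heisGauge_add_sq p
  rw [show heisGauge n p = 1 from hp] at this
  simp only [Metric.mem_closedBall, dist_zero_right]
  linarith

lemma exists_heisGauge_eq_one_of_ne_zero {p : Fin (2*n+1) → ℝ} (hp : p ≠ 0) :
    ∃ u, heisGauge n u = 1 ∧ p = hdil n (heisGauge n p) u := by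
  have hg := heisGauge_pos hp
  refine ⟨hdil n (heisGauge n p)⁻¹ p, ?_, ?_⟩
  · rw [heisGauge_hdil (inv_nonneg.mpr hg.le), inv_mul_cancel₀ hg.ne']
  · rw [hdil_hdil, mul_inv_cancel₀ hg.ne', hdil_one]

end Gauge

namespace IsHomDist

variable {n : ℕ} {d : (Fin (2*n+1) → ℝ) → (Fin (2*n+1) → ℝ) → ℝ}

lemma dist_self (hd : IsHomDist n d) (x : Fin (2*n+1) → ℝ) : d x x = 0 :=
  (hd.eq_zero_iff x x).mpr rfl

lemma nonneg (hd : IsHomDist n d) (x y : Fin (2*n+1) → ℝ) : 0 ≤ d x y := by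
  linarith [hd.triangle x y x, hd.symm y x, hd.dist_self x]

lemma dist_zero_pos (hd : IsHomDist n d) {x : Fin (2*n+1) → ℝ} (hx : x ≠ 0) : 0 < d x 0 :=
  (hd.nonneg x 0).lt_of_ne fun h => hx ((hd.eq_zero_iff x 0).mp h.symm)

lemma dist_eq_dist_hmul_neg (hd : IsHomDist n d) (a b : Fin (2*n+1) → ℝ) :
    d a b = d (hmul n (-b) a) 0 := by
  have h := hd.leftInvariant b (hmul n (-b) a) 0
  rw [hd.symm]
  rwa [← hmul_assoc, hmul_neg_self, zero_hmul, hmul_zero, hd.symm] at h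

lemma dist_hmul_zero_le (hd : IsHomDist n d) (a b : Fin (2*n+1) → ℝ) :
    d (hmul n a b) 0 ≤ d a 0 + d b 0 := by
  have h := hd.leftInvariant a b 0
  rw [hmul_zero] at h
  linarith [hd.triangle (hmul n a b) a 0]

lemma continuous_dist_zero (hd : IsHomDist n d) : Continuous fun p => d p 0 :=
  hd.continuous.comp (continuous_id.prodMk continuous_const)

lemma dist_zero_eq_heisGauge_mul (hd : IsHomDist n d) {p : Fin (2*n+1) → ℝ} (hp : p ≠ 0) :
    ∃ u, heisGauge n u = 1 ∧ d p 0 = heisGauge n p * d u 0 := by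
  obtain ⟨u, hu, hpu⟩ := exists_heisGauge_eq_one_of_ne_zero hp
  have hg := heisGauge_pos hp
  refine ⟨u, hu, ?_⟩
  conv_lhs => rw [hpu, ← hdil_zero_right (heisGauge n p)]
  exact hd.homogeneous _ hg u 0

lemma exists_pos_mul_heisGauge_le (hd : IsHomDist n d) :
    ∃ c > 0, ∀ p, c * heisGauge n p ≤ d p 0 := by
  obtain ⟨c, hc, hcS⟩ := isCompact_heisGauge_eq_one.exists_forall_le'
    hd.continuous_dist_zero.continuousOn fun u (hu : heisGauge n u = 1) =>
      hd.dist_zero_pos fun h => by simp [h, heisGauge_zero] at hu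
  refine ⟨c, hc, fun p => ?_⟩
  rcases eq_or_ne p 0 with rfl | hp
  · simp [heisGauge_zero, hd.dist_self]
  obtain ⟨u, hu, hpu⟩ := hd.dist_zero_eq_heisGauge_mul hp
  rw [hpu, mul_comm]
  exact mul_le_mul_of_nonneg_left (hcS u hu) (heisGauge_nonneg p)

lemma exists_le_mul_heisGauge (hd : IsHomDist n d) :
    ∃ C ≥ 0, ∀ p, d p 0 ≤ C * heisGauge n p := by
  obtain ⟨C, hC⟩ := isCompact_heisGauge_eq_one.exists_bound_of_continuousOn
    hd.continuous_dist_zero.continuousOn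
  refine ⟨max C 0, le_max_right _ _, fun p => ?_⟩
  rcases eq_or_ne p 0 with rfl | hp
  · simp [heisGauge_zero, hd.dist_self]
  obtain ⟨u, hu, hpu⟩ := hd.dist_zero_eq_heisGauge_mul hp
  have hCu : d u 0 ≤ max C 0 :=
    (le_abs_self _).trans ((hC u hu).trans (le_max_left _ _))
  rw [hpu, mul_comm (max C 0)]
  exact mul_le_mul_of_nonneg_left hCu (heisGauge_nonneg p)

lemma tendsto_zero_of_tendsto_dist_zero (hd : IsHomDist n d) {α : Type*} {l : Filter α}
    {g : α → Fin (2*n+1) → ℝ} (hg : Tendsto (fun a => d (g a) 0) l (𝓝 0)) :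
    Tendsto g l (𝓝 0) := by
  obtain ⟨c, hc, hcg⟩ := hd.exists_pos_mul_heisGauge_le
  have hgauge : Tendsto (fun a => heisGauge n (g a)) l (𝓝 0) :=
    squeeze_zero (fun a => heisGauge_nonneg _)
      (fun a => (le_div_iff₀' hc).mpr (hcg (g a))) (by simpa using hg.div_const c)
  rw [tendsto_zero_iff_norm_tendsto_zero]
  exact squeeze_zero (fun a => norm_nonneg _) (fun a => norm_le_heisGauge_add_sq (g a))
    (by simpa using hgauge.add (hgauge.pow 2))

end IsHomDist

def IsHomogeneousHom (n : ℕ) {E : Type*} [AddCommGroup E] [Module ℝ E]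
    (D : (Fin (2*n+1) → ℝ) → E) : Prop :=
  (∀ p q, D (hmul n p q) = D p + D q) ∧ (∀ t > (0:ℝ), ∀ p, D (hdil n t p) = t • D p)

lemma isHomogeneousHom_horizontalPart (n : ℕ) : IsHomogeneousHom n (horizontalPart n) :=
  ⟨horizontalPart_hmul, fun t _ => horizontalPart_hdil t⟩

namespace IsHomogeneousHom

variable {n : ℕ} {E : Type*}

section Algebraic

variable [AddCommGroup E] [Module ℝ E] {D : (Fin (2*n+1) → ℝ) → E}

lemma comp_isHHomH (hD : IsHomogeneousHom n D) {L : (Fin (2*n+1) → ℝ) → Fin (2*n+1) → ℝ}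
    (hL : IsHHomH n L) : IsHomogeneousHom n (D ∘ L) :=
  ⟨fun p q => by simp [hL.1, hD.1], fun t ht p => by simp [hL.2 t ht, hD.2 t ht]⟩

/-- `δ₂ c = c⁴` for central `c`, while homogeneity gives `D (δ₂ c) = 2 D c`. -/
lemma map_of_mem_H2set (hD : IsHomogeneousHom n D) {c : Fin (2*n+1) → ℝ}
    (hc : c ∈ H2set n) : D c = 0 := by
  have h4 : hdil n 2 c = hmul n (hmul n c c) (hmul n c c) := by
    rw [hdil_of_mem_H2set _ hc, hmul_self, hmul_self, smul_smul]
    norm_num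
  have h := hD.2 2 two_pos c
  rw [h4, hD.1, hD.1] at h
  have : (2 : ℝ) • D c = 0 := by rw [two_smul] at h ⊢; linear_combination (norm := module) h
  exact (smul_eq_zero.mp this).resolve_left two_ne_zero

lemma map_eq_of_horizontalPart_eq (hD : IsHomogeneousHom n D) {p q : Fin (2*n+1) → ℝ}
    (h : horizontalPart n p = horizontalPart n q) : D p = D q := by
  have hc : p - q ∈ H2set n := fun j hj => by
    simpa [horizontalPart_apply_of_ne _ hj, sub_eq_zero] using congrFun h j
  rw [← add_sub_cancel q p, ← hmul_of_mem_H2set hc, hD.1, hD.map_of_mem_H2set hc, add_zero]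

lemma map_horizontalPart (hD : IsHomogeneousHom n D) (p : Fin (2*n+1) → ℝ) :
    D (horizontalPart n p) = D p :=
  hD.map_eq_of_horizontalPart_eq (horizontalPart_horizontalPart p)

lemma map_add (hD : IsHomogeneousHom n D) (p q : Fin (2*n+1) → ℝ) : D (p + q) = D p + D q := by
  rw [← hD.1]
  exact hD.map_eq_of_horizontalPart_eq (by rw [horizontalPart_hmul, horizontalPart_add])

lemma map_smul (hD : IsHomogeneousHom n D) (t : ℝ) (p : Fin (2*n+1) → ℝ) :
    D (t • p) = t • D p := by
  have hpos : ∀ s > (0:ℝ), ∀ q, D (s • q) = s • D q := fun s hs q => by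
    rw [← hD.2 s hs]
    exact hD.map_eq_of_horizontalPart_eq (by rw [horizontalPart_hdil, horizontalPart_smul])
  have hneg : ∀ q, D (-q) = -D q := fun q =>
    eq_neg_of_add_eq_zero_left <| by
      rw [← hD.map_add, neg_add_cancel, hD.map_of_mem_H2set zero_mem_H2set]
  rcases lt_trichotomy t 0 with ht | rfl | ht
  · rw [show t • p = -((-t) • p) by simp, hneg, hpos _ (neg_pos.mpr ht), neg_smul, neg_neg]
  · simp [hD.map_of_mem_H2set zero_mem_H2set]
  · exact hpos t ht p

def toLinearMap (hD : IsHomogeneousHom n D) : (Fin (2*n+1) → ℝ) →ₗ[ℝ] E where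
  toFun := D
  map_add' := hD.map_add
  map_smul' := hD.map_smul

end Algebraic

variable [NormedAddCommGroup E] [NormedSpace ℝ E] {D : (Fin (2*n+1) → ℝ) → E}
  {d : (Fin (2*n+1) → ℝ) → (Fin (2*n+1) → ℝ) → ℝ}

lemma exists_norm_le_dist_zero (hD : IsHomogeneousHom n D) (hd : IsHomDist n d) :
    ∃ K, ∀ p, ‖D p‖ ≤ K * d p 0 := by
  obtain ⟨c, hc, hcd⟩ := hd.exists_pos_mul_heisGauge_le
  let ℓ := LinearMap.toContinuousLinearMap hD.toLinearMap
  refine ⟨‖ℓ‖ / c, fun p => ?_⟩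
  calc ‖D p‖ = ‖ℓ (horizontalPart n p)‖ := by rw [← hD.map_horizontalPart]; rfl
    _ ≤ ‖ℓ‖ * heisGauge n p :=
      (ℓ.le_opNorm _).trans (mul_le_mul_of_nonneg_left (norm_horizontalPart_le_heisGauge p)
        (norm_nonneg _))
    _ ≤ ‖ℓ‖ * (d p 0 / c) :=
      mul_le_mul_of_nonneg_left ((le_div_iff₀' hc).mpr (hcd p)) (norm_nonneg _)
    _ = ‖ℓ‖ / c * d p 0 := by ring

lemma exists_lipschitz (hD : IsHomogeneousHom n D) (hd : IsHomDist n d) :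
    ∃ K, ∀ a b, ‖D a - D b‖ ≤ K * d a b := by
  obtain ⟨K, hKD⟩ := hD.exists_norm_le_dist_zero hd
  refine ⟨K, fun a b => ?_⟩
  have hsub : D (hmul n (-b) a) = D a - D b := by
    rw [hD.1, ← neg_one_smul ℝ b, hD.map_smul, neg_one_smul, neg_add_eq_sub]
  rw [hd.dist_eq_dist_hmul_neg, ← hsub]
  exact hKD _

end IsHomogeneousHom

section ChainRule

variable {n : ℕ} {d : (Fin (2*n+1) → ℝ) → (Fin (2*n+1) → ℝ) → ℝ}

lemma IsHomDist.isLittleO_of_tendsto_div (hd : IsHomDist n d) {s : Set (Fin (2*n+1) → ℝ)}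
    (hs : 0 ∉ s) {u : (Fin (2*n+1) → ℝ) → ℝ} (h : Tendsto (fun q => u q / d q 0) (𝓝[s] 0) (𝓝 0)) :
    u =o[𝓝[s] 0] fun q => d q 0 :=
  (isLittleO_iff_tendsto' <| eventually_mem_nhdsWithin.mono fun _ hq h0 =>
    absurd h0 (hd.dist_zero_pos (ne_of_mem_of_not_mem hq hs)).ne').mpr h

lemma PansuDiffAt.isLittleO {k : ℕ} {f Df : (Fin (2*n+1) → ℝ) → EuclideanSpace ℝ (Fin k)}
    {x : Fin (2*n+1) → ℝ} (h : PansuDiffAt n k d f Df x) (hd : IsHomDist n d) :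
    (fun q => f (hmul n x q) - f x - Df q) =o[𝓝 0] fun q => d q 0 := by
  have hDf : IsHomogeneousHom n Df := h.1
  have huniv : (univ : Set (Fin (2*n+1) → ℝ)) = insert 0 {0}ᶜ := by
    rw [Set.insert_eq, Set.union_compl_self]
  rw [← nhdsWithin_univ, huniv]
  refine IsLittleO.insert ?_ (by simp [hmul_zero, hDf.map_of_mem_H2set zero_mem_H2set])
  exact (hd.isLittleO_of_tendsto_div (by simp) h.2).of_norm_left

lemma IsHHomH.exists_dist_zero_le {L : (Fin (2*n+1) → ℝ) → Fin (2*n+1) → ℝ} (hL : IsHHomH n L)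
    (hd : IsHomDist n d) : ∃ C, ∀ p, L p ∈ H1set n → d (L p) 0 ≤ C * d p 0 := by
  obtain ⟨C₀, hC₀, hC₀d⟩ := hd.exists_le_mul_heisGauge
  obtain ⟨K, hK⟩ :=
    ((isHomogeneousHom_horizontalPart n).comp_isHHomH hL).exists_norm_le_dist_zero hd
  refine ⟨C₀ * K, fun p hp => ?_⟩
  calc d (L p) 0 ≤ C₀ * heisGauge n (L p) := hC₀d _
    _ = C₀ * ‖horizontalPart n (L p)‖ := by rw [heisGauge_of_apply_last_eq_zero hp]
    _ ≤ C₀ * (K * d p 0) := mul_le_mul_of_nonneg_left (hK p) hC₀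
    _ = C₀ * K * d p 0 := by ring

end ChainRule

theorem stmt_13_general (n k : ℕ) (d : (Fin (2*n+1) → ℝ) → (Fin (2*n+1) → ℝ) → ℝ)
    (hd : IsHomDist n d) (W V : Set (Fin (2*n+1) → ℝ))
    (hV : IsHorizontal n V)
    (φ : (Fin (2*n+1) → ℝ) → (Fin (2*n+1) → ℝ))
    (ζ : Fin (2*n+1) → ℝ)
    (x : Fin (2*n+1) → ℝ) (hx : x = hmul n ζ (φ ζ))
    (f : (Fin (2*n+1) → ℝ) → EuclideanSpace ℝ (Fin k))
    (Df : (Fin (2*n+1) → ℝ) → EuclideanSpace ℝ (Fin k))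
    (hf : PansuDiffAt n k d f Df x)
    (L : (Fin (2*n+1) → ℝ) → (Fin (2*n+1) → ℝ))
    (hL : IntrinsicDiffAt n d W V φ L ζ) :
    Tendsto (fun w =>
        ‖(f (hmul n (hmul n (hmul n x w) (-(φ ζ))) (φ (hmul n (hmul n x w) (-(φ ζ)))))
            - f x) - Df (hmul n w (L w))‖ / d w 0)
      (𝓝[W \ {0}] 0) (𝓝 0) := by
  obtain ⟨hLhom, hLV, hIntr⟩ := hL
  have hDf : IsHomogeneousHom n Df := hf.1
  set l := 𝓝[W \ {0}] (0 : Fin (2*n+1) → ℝ)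
  set ψ := fun w => hmul n (-(φ ζ)) (φ (hmul n (hmul n x w) (-(φ ζ)))) with hψ_def
  have hψ : (fun w => d (L w) (ψ w)) =o[l] fun w => d w 0 := by
    subst hx; exact hd.isLittleO_of_tendsto_div (by simp) hIntr
  obtain ⟨C, hC⟩ := hLhom.exists_dist_zero_le hd
  have hη : (fun w => d (hmul n w (ψ w)) 0) =O[l] fun w => d w 0 := by
    refine .trans (.of_norm_eventuallyLE (eventually_mem_nhdsWithin.mono fun w hw => ?_))
      (((isBigO_refl _ _).add hψ.isBigO).add ((isBigO_refl _ _).const_mul_left C))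
    dsimp only
    rw [Real.norm_of_nonneg (hd.nonneg _ _)]
    linarith [hd.dist_hmul_zero_le w (ψ w), hd.triangle (ψ w) (L w) 0, hd.symm (ψ w) (L w),
      hC w (hV.2 (hLV ⟨w, hw.1, rfl⟩))]
  have hηlim : Tendsto (fun w => hmul n w (ψ w)) l (𝓝 0) :=
    hd.tendsto_zero_of_tendsto_dist_zero <| hη.trans_tendsto <|
      (hd.continuous_dist_zero.tendsto' 0 0 (hd.dist_self 0)).mono_left nhdsWithin_le_nhds
  have hremainder := ((hf.isLittleO hd).comp_tendsto hηlim).trans_isBigO hη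
  obtain ⟨K, hK⟩ := hDf.exists_lipschitz hd
  have hlinear : (fun w => Df (ψ w) - Df (L w)) =o[l] fun w => d w 0 :=
    (isBigO_of_le' (c := K) l fun w => by
      rw [Real.norm_of_nonneg (hd.nonneg _ _), hd.symm]; exact hK _ _).trans_isLittleO hψ
  refine ((hremainder.add hlinear).congr_left fun w => ?_).norm_left.tendsto_div_nhds_zero
  simp only [Function.comp_apply, hψ_def, hDf.1, hmul_assoc]
  abel

/-- Chain rule: if `f` is Pansu differentiable at `x = Φ(x_W)` and `φ` is intrinsic
differentiable at `x_W ∈ U ⊆ W` with intrinsic differential `L`, then `F = f ∘ Φ` is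
extrinsically differentiable at `x_W` with respect to `(V, x)`, with extrinsic
differential `w ↦ Df(x)(w · L(w))`; i.e.
`|F(σ_x(w)) − F(x_W) − Df(x)(w · L(w))| / ∥w∥ → 0` as `W ∋ w → 0`. -/
theorem stmt_13 (n k : ℕ) (d : (Fin (2*n+1) → ℝ) → (Fin (2*n+1) → ℝ) → ℝ)
    (hd : IsHomDist n d) (W V : Set (Fin (2*n+1) → ℝ))
    (hW : IsVertical n W) (hV : IsHorizontal n V) (hWV : IsSemidirect n W V)
    (U : Set (Fin (2*n+1) → ℝ)) (hUW : U ⊆ W) (hUopen : ∃ O, IsOpen O ∧ U = O ∩ W)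
    (Ω : Set (Fin (2*n+1) → ℝ)) (hΩ : IsOpen Ω)
    (φ : (Fin (2*n+1) → ℝ) → (Fin (2*n+1) → ℝ)) (hφ : ∀ w ∈ U, φ w ∈ V)
    (hΦU : ∀ w ∈ U, hmul n w (φ w) ∈ Ω)
    (ζ : Fin (2*n+1) → ℝ) (hζ : ζ ∈ U)
    (x : Fin (2*n+1) → ℝ) (hx : x = hmul n ζ (φ ζ))
    (f : (Fin (2*n+1) → ℝ) → EuclideanSpace ℝ (Fin k))
    (Df : (Fin (2*n+1) → ℝ) → EuclideanSpace ℝ (Fin k))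
    (hf : PansuDiffAt n k d f Df x)
    (L : (Fin (2*n+1) → ℝ) → (Fin (2*n+1) → ℝ))
    (hL : IntrinsicDiffAt n d W V φ L ζ) :
    Tendsto (fun w =>
        ‖(f (hmul n (hmul n (hmul n x w) (-(φ ζ))) (φ (hmul n (hmul n x w) (-(φ ζ)))))
            - f x) - Df (hmul n w (L w))‖ / d w 0)
      (𝓝[W \ {0}] 0) (𝓝 0) :=
  stmt_13_general n k d hd W V hV φ ζ x hx f Df hf L hL
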